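/- arXiv:2101.10494 — 2 statements merged into one kernel-verified Lean document; each statement's English description precedes it below -/
import Mathlib

section
/- (Proposition 1) The free categorical quasiproduct monoid CQ has exactly one proper non-trivial quotient, namely the free Cartesian monoid: every congruence θ on CQ (compatible with composition and pairing) that is strictly larger than equality and does not identify all elements coincides with the kernel of the canonical projection of CQ onto CM, i.e. with the congruence induced by =_CM. -/
/-- Terms of the free (quasi-)Cartesian monoid: constants `I, L, R`,
composition `comp` (written `*` in the paper) and pairing `pair`. -/
inductive Term : Type
  | I : Term
  | L : Term
  | R : Term
  | comp : Term → Term → Term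
  | pair : Term → Term → Term
  deriving DecidableEq

open Term

/-- The rewrite rules (1)-(7), indexed by their number. -/
inductive Rule : ℕ → Term → Term → Prop
  | r1 (x y : Term) : Rule 1 (comp L (pair x y)) x
  | r2 (x y : Term) : Rule 2 (comp R (pair x y)) y
  | r3 (x y z : Term) : Rule 3 (comp (pair x y) z) (pair (comp x z) (comp y z))
  | r4 (x : Term) : Rule 4 (comp I x) x
  | r5 (x : Term) : Rule 5 (comp x I) x
  | r6 (x : Term) : Rule 6 (pair (comp L x) (comp R x)) x
  | r7 : Rule 7 (pair L R) I

/-- The congruence generated by associativity of `comp`. -/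
inductive AssocEq : Term → Term → Prop
  | assoc (a b c : Term) : AssocEq (comp (comp a b) c) (comp a (comp b c))
  | refl (a : Term) : AssocEq a a
  | symm {a b : Term} : AssocEq a b → AssocEq b a
  | trans {a b c : Term} : AssocEq a b → AssocEq b c → AssocEq a c
  | comp_congr {a a' b b' : Term} :
      AssocEq a a' → AssocEq b b' → AssocEq (comp a b) (comp a' b')
  | pair_congr {a a' b b' : Term} :
      AssocEq a a' → AssocEq b b' → AssocEq (pair a b) (pair a' b')

/-- One-step rewriting by a rule whose index lies in `J`,
closed under replacement of subterms (monotone closure). -/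
inductive Step (J : Set ℕ) : Term → Term → Prop
  | rule {n : ℕ} {x y : Term} : n ∈ J → Rule n x y → Step J x y
  | comp_left {a a' b : Term} : Step J a a' → Step J (comp a b) (comp a' b)
  | comp_right {a b b' : Term} : Step J b b' → Step J (comp a b) (comp a b')
  | pair_left {a a' b : Term} : Step J a a' → Step J (pair a b) (pair a' b)
  | pair_right {a b b' : Term} : Step J b b' → Step J (pair a b) (pair a b')

/-- One-step rewriting modulo associativity. -/
def StepA (J : Set ℕ) (a b : Term) : Prop :=
  ∃ a' b', AssocEq a a' ∧ Step J a' b' ∧ AssocEq b' b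

/-- Many-step rewriting `↠_J`: the monotone reflexive transitive closure of
one-step rewriting by the rules in `J`, modulo associativity. -/
def Red (J : Set ℕ) (a b : Term) : Prop :=
  ∃ c, Relation.ReflTransGen (StepA J) a c ∧ AssocEq c b

/-- `a` is in normal form w.r.t. the rules in `J` (modulo associativity). -/
def NF (J : Set ℕ) (a : Term) : Prop := ∀ b, ¬ StepA J a b

/-- Rules (1)-(7). -/
def rules17 : Set ℕ := {n | 1 ≤ n ∧ n ≤ 7}
/-- Rules (1)-(5). -/
def rules15 : Set ℕ := {n | 1 ≤ n ∧ n ≤ 5}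
/-- Rules (1)-(4). -/
def rules14 : Set ℕ := {n | 1 ≤ n ∧ n ≤ 4}
/-- Rules (5), (6), (7). -/
def rules567 : Set ℕ := {5, 6, 7}

/-- The congruence `=_CM` generated by the Cartesian monoid axioms (i)-(iv)
and the monoid axioms for `comp` with unit `I`. -/
inductive CMEq : Term → Term → Prop
  | proj_left (f g : Term) : CMEq (comp L (pair f g)) f
  | proj_right (f g : Term) : CMEq (comp R (pair f g)) g
  | lift (f g h : Term) : CMEq (comp (pair f g) h) (pair (comp f h) (comp g h))
  | surj : CMEq (pair L R) I
  | assoc (a b c : Term) : CMEq (comp (comp a b) c) (comp a (comp b c))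
  | one_mul (a : Term) : CMEq (comp I a) a
  | mul_one (a : Term) : CMEq (comp a I) a
  | refl (a : Term) : CMEq a a
  | symm {a b : Term} : CMEq a b → CMEq b a
  | trans {a b c : Term} : CMEq a b → CMEq b c → CMEq a c
  | comp_congr {a a' b b' : Term} :
      CMEq a a' → CMEq b b' → CMEq (comp a b) (comp a' b')
  | pair_congr {a a' b b' : Term} :
      CMEq a a' → CMEq b b' → CMEq (pair a b) (pair a' b')

/-- The congruence `=_CQ` generated by the axioms (i)-(iii)
and the monoid axioms (no surjectivity `⟨L,R⟩ = I`). -/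
inductive CQEq : Term → Term → Prop
  | proj_left (f g : Term) : CQEq (comp L (pair f g)) f
  | proj_right (f g : Term) : CQEq (comp R (pair f g)) g
  | lift (f g h : Term) : CQEq (comp (pair f g) h) (pair (comp f h) (comp g h))
  | assoc (a b c : Term) : CQEq (comp (comp a b) c) (comp a (comp b c))
  | one_mul (a : Term) : CQEq (comp I a) a
  | mul_one (a : Term) : CQEq (comp a I) a
  | refl (a : Term) : CQEq a a
  | symm {a b : Term} : CQEq a b → CQEq b a
  | trans {a b c : Term} : CQEq a b → CQEq b c → CQEq a c
  | comp_congr {a a' b b' : Term} :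
      CQEq a a' → CQEq b b' → CQEq (comp a b) (comp a' b')
  | pair_congr {a a' b b' : Term} :
      CQEq a a' → CQEq b b' → CQEq (pair a b) (pair a' b')

/-- An injective numerical encoding of terms, used to state computability. -/
def encodeTerm : Term → ℕ
  | I => 0
  | L => 1
  | R => 2
  | comp a b => 2 * Nat.pair (encodeTerm a) (encodeTerm b) + 3
  | pair a b => 2 * Nat.pair (encodeTerm a) (encodeTerm b) + 4

/-- A numerical encoding of finite lists of terms. -/
def encodeTermList : List Term → ℕ
  | [] => 0
  | a :: l => Nat.pair (encodeTerm a) (encodeTermList l) + 1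

/-- The product of a list of terms (with `I` as the empty product). -/
def listProd : List Term → Term
  | [] => I
  | a :: l => comp a (listProd l)

/-- `=_CQ` as a setoid. -/
def cqSetoid : Setoid Term :=
  ⟨CQEq, ⟨fun a => CQEq.refl a, fun h => h.symm, fun h₁ h₂ => h₁.trans h₂⟩⟩

/-- The free categorical quasiproduct monoid `CQ = T / =_CQ`. -/
def CQ : Type := Quotient cqSetoid

/-- `=_CM` as a setoid. -/
def cmSetoid : Setoid Term :=
  ⟨CMEq, ⟨fun a => CMEq.refl a, fun h => h.symm, fun h₁ h₂ => h₁.trans h₂⟩⟩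

/-- The free Cartesian monoid `CM = T / =_CM`. -/
def CM : Type := Quotient cmSetoid

/-- The submonoid of `CQ` generated by (the classes of) the members of `B`,
as a set of elements of `CQ`. -/
def genSubmonoidCQ (B : List Term) : Set CQ :=
  {x | ∃ l : List Term, (∀ t ∈ l, t ∈ B) ∧ Quotient.mk cqSetoid (listProd l) = x}

/-- The submonoid of `CM` generated by (the classes of) the members of `B`,
as a set of elements of `CM`. -/
def genSubmonoidCM (B : List Term) : Set CM :=
  {x | ∃ l : List Term, (∀ t ∈ l, t ∈ B) ∧ Quotient.mk cmSetoid (listProd l) = x}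

/-- A shift: a product (under `comp`) of copies of `L` and `R`,
with `I` as the empty product. -/
inductive IsShift : Term → Prop
  | unit : IsShift I
  | left : IsShift L
  | right : IsShift R
  | comp {s t : Term} : IsShift s → IsShift t → IsShift (comp s t)

/-- The CQ normal form (normal form w.r.t. rules (1)-(5)) of `X` is a shift. -/
def nfIsShift (X : Term) : Prop :=
  ∃ N, Red rules15 X N ∧ NF rules15 N ∧ IsShift N

/-- The product `F_0 * ⋯ * F_{n-1}` of the first `n` values of a sequence. -/
def prodTake (f : ℕ → Term) (n : ℕ) : Term := listProd ((List.range n).map f)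

/-- `B` covers Cantor space: there is an infinite sequence of members of `B`
such that for each shift `S` some finite initial product composed with `S`
has a CQ normal form that is not a shift. -/
def Covers (B : List Term) : Prop :=
  ∃ f : ℕ → Term, (∀ n, f n ∈ B) ∧
    ∀ S, IsShift S → ∃ n, ¬ nfIsShift (comp S (prodTake f n))

/-- The shift `S` is bad for `B`: for every finite sequence of members of `B`,
the CQ normal form of `S*F_1*⋯*F_n` is a shift. -/
def BadFor (B : List Term) (S : Term) : Prop :=
  ∀ l : List Term, (∀ t ∈ l, t ∈ B) → nfIsShift (comp S (listProd l))

/-- The length of a shift: the number of occurrences of `L` and `R`. -/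
def lenLR : Term → ℕ
  | I => 0
  | L => 1
  | R => 1
  | comp a b => lenLR a + lenLR b
  | pair a b => lenLR a + lenLR b

/-- `S` is extenuative for `B`: it is bad for `B` and the CQ normal forms of
`S*F_1*⋯*F_k` (for `F_i` in `B`) have unbounded length. -/
def Extenuative (B : List Term) (S : Term) : Prop :=
  BadFor B S ∧ ∀ n : ℕ, ∃ l : List Term, (∀ t ∈ l, t ∈ B) ∧
    ∃ N, Red rules15 (comp S (listProd l)) N ∧ NF rules15 N ∧ n ≤ lenLR N

/-- A term represents a right invertible element of CM. -/
def RightInvCM (F : Term) : Prop := ∃ G, CMEq (comp F G) I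

/-!
Every term is `=_CQ`-equal to a tree of pairs whose leaves are words in `L` and `R`, and a word
`w` maps the perfect pair tree of depth `|w|` with leaves `s` back to `s`. With such trees, right
multiplication separates two words ending in different letters, so a congruence identifying two
distinct words identifies everything. Projecting two distinct normal forms with `L` and `R`
reduces either to two words or to a word `w` against a pair `⟨a, b⟩`; multiplying the latter by a
tree that `w` sends to `I` gives `I ~ ⟨p, q⟩`, hence `L ~ p`, `R ~ q` and `⟨L, R⟩ ~ I`. The same
descent, guided by `⟨L w, R w⟩ =_CM w`, shows that a congruence identifying two terms that are
not `=_CM`-equal identifies everything.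
-/

def letter : Bool → Term
  | true => L
  | false => R

def word : List Bool → Term
  | [] => I
  | c :: w => comp (letter c) (word w)

/-- The perfect pair tree of depth `n` with all leaves `s`. -/
def constTree : ℕ → Term → Term
  | 0, s => s
  | n + 1, s => constTree n (pair s s)

inductive CQNormal : Type
  | leaf : List Bool → CQNormal
  | node : CQNormal → CQNormal → CQNormal

namespace CQNormal

def toTerm : CQNormal → Term
  | leaf w => word w
  | node X Y => pair X.toTerm Y.toTerm

end CQNormal

namespace CQEq

lemma toCMEq {a b : Term} (h : CQEq a b) : CMEq a b := by
  induction h with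
  | proj_left f g => exact CMEq.proj_left f g
  | proj_right f g => exact CMEq.proj_right f g
  | lift f g h => exact CMEq.lift f g h
  | assoc a b c => exact CMEq.assoc a b c
  | one_mul a => exact CMEq.one_mul a
  | mul_one a => exact CMEq.mul_one a
  | refl a => exact CMEq.refl a
  | symm _ ih => exact ih.symm
  | trans _ _ ih₁ ih₂ => exact ih₁.trans ih₂
  | comp_congr _ _ ih₁ ih₂ => exact CMEq.comp_congr ih₁ ih₂
  | pair_congr _ _ ih₁ ih₂ => exact CMEq.pair_congr ih₁ ih₂

lemma letter_mul_pair (c : Bool) (x y : Term) :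
    CQEq (comp (letter c) (pair x y)) (cond c x y) := by
  cases c
  · exact proj_right x y
  · exact proj_left x y

lemma word_mul_constTree (w : List Bool) (s : Term) :
    CQEq (comp (word w) (constTree w.length s)) s := by
  induction w generalizing s with
  | nil => exact one_mul s
  | cons c w ih =>
    refine (assoc _ _ _).trans ((comp_congr (refl _) (ih (pair s s))).trans ?_)
    simpa only [Bool.cond_self] using letter_mul_pair c s s

lemma word_append_mul_pair (w : List Bool) (c : Bool) (x y : Term) :
    CQEq (comp (word (w ++ [c])) (pair x y)) (comp (word w) (cond c x y)) := by
  induction w with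
  | nil =>
    exact (assoc _ _ _).trans ((comp_congr (refl _) (one_mul _)).trans
      ((letter_mul_pair c x y).trans (one_mul _).symm))
  | cons c' w ih => exact (assoc _ _ _).trans ((comp_congr (refl _) ih).trans (assoc _ _ _).symm)

lemma word_append_mul_pair_one (w : List Bool) (c : Bool) :
    CQEq (comp (word (w ++ [c])) (pair I I)) (word w) := by
  have h := word_append_mul_pair w c I I
  rw [Bool.cond_self] at h
  exact h.trans (mul_one _)

end CQEq

lemma CMEq.eta (a : Term) : CMEq (pair (comp L a) (comp R a)) a :=
  (lift L R a).symm.trans ((comp_congr surj (refl a)).trans (one_mul a))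

namespace CQNormal

lemma exists_letter_mul (c : Bool) : ∀ Y : CQNormal, ∃ Z : CQNormal,
    CQEq (comp (letter c) Y.toTerm) Z.toTerm
  | leaf v => ⟨leaf (c :: v), CQEq.refl _⟩
  | node Y₁ Y₂ => ⟨cond c Y₁ Y₂, by cases c <;> exact CQEq.letter_mul_pair _ _ _⟩

lemma exists_word_mul (Y : CQNormal) : ∀ w : List Bool, ∃ Z : CQNormal,
    CQEq (comp (word w) Y.toTerm) Z.toTerm
  | [] => ⟨Y, CQEq.one_mul _⟩
  | c :: w => by
    obtain ⟨Z, hZ⟩ := exists_word_mul Y w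
    obtain ⟨Z', hZ'⟩ := exists_letter_mul c Z
    exact ⟨Z', (CQEq.assoc _ _ _).trans ((CQEq.comp_congr (CQEq.refl _) hZ).trans hZ')⟩

lemma exists_mul (Y : CQNormal) : ∀ X : CQNormal, ∃ Z : CQNormal,
    CQEq (comp X.toTerm Y.toTerm) Z.toTerm
  | leaf w => exists_word_mul Y w
  | node X₁ X₂ => by
    obtain ⟨Z₁, h₁⟩ := exists_mul Y X₁
    obtain ⟨Z₂, h₂⟩ := exists_mul Y X₂
    exact ⟨node Z₁ Z₂, (CQEq.lift _ _ _).trans (CQEq.pair_congr h₁ h₂)⟩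

lemma exists_cqEq_toTerm (t : Term) : ∃ X : CQNormal, CQEq t X.toTerm := by
  induction t with
  | I => exact ⟨leaf [], CQEq.refl _⟩
  | L => exact ⟨leaf [true], (CQEq.mul_one L).symm⟩
  | R => exact ⟨leaf [false], (CQEq.mul_one R).symm⟩
  | comp a b iha ihb =>
    obtain ⟨X, hX⟩ := iha
    obtain ⟨Y, hY⟩ := ihb
    obtain ⟨Z, hZ⟩ := exists_mul Y X
    exact ⟨Z, (CQEq.comp_congr hX hY).trans hZ⟩
  | pair a b iha ihb =>
    obtain ⟨X, hX⟩ := iha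
    obtain ⟨Y, hY⟩ := ihb
    exact ⟨node X Y, CQEq.pair_congr hX hY⟩

end CQNormal

/-- A congruence on terms containing `=_CQ`, i.e. a congruence on `CQ`. -/
structure IsCQCongruence (θ : Term → Term → Prop) : Prop where
  equivalence : Equivalence θ
  comp_congr : ∀ {a a' b b' : Term}, θ a a' → θ b b' → θ (comp a b) (comp a' b')
  pair_congr : ∀ {a a' b b' : Term}, θ a a' → θ b b' → θ (pair a b) (pair a' b')
  of_cqEq : ∀ {a b : Term}, CQEq a b → θ a b

namespace IsCQCongruence

open CQNormal

variable {θ : Term → Term → Prop} (hθ : IsCQCongruence θ) {a b c d : Term}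
include hθ

lemma symm (h : θ a b) : θ b a := hθ.equivalence.symm h

lemma trans (h₁ : θ a b) (h₂ : θ b c) : θ a c := hθ.equivalence.trans h₁ h₂

lemma mul_left (c : Term) (h : θ a b) : θ (comp c a) (comp c b) :=
  hθ.comp_congr (hθ.equivalence.refl c) h

lemma mul_right (c : Term) (h : θ a b) : θ (comp a c) (comp b c) :=
  hθ.comp_congr h (hθ.equivalence.refl c)

lemma congr_cqEq (h : θ a b) (ha : CQEq a c) (hb : CQEq b d) : θ c d :=
  hθ.trans (hθ.of_cqEq ha.symm) (hθ.trans h (hθ.of_cqEq hb))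

lemma fst {a' b' : Term} (h : θ (pair a b) (pair a' b')) : θ a a' :=
  hθ.congr_cqEq (hθ.mul_left L h) (CQEq.proj_left a b) (CQEq.proj_left a' b')

lemma snd {a' b' : Term} (h : θ (pair a b) (pair a' b')) : θ b b' :=
  hθ.congr_cqEq (hθ.mul_left R h) (CQEq.proj_right a b) (CQEq.proj_right a' b')

lemma of_cmEq (hsurj : θ (pair L R) I) (h : CMEq a b) : θ a b := by
  induction h with
  | surj => exact hsurj
  | refl a => exact hθ.equivalence.refl a
  | symm _ ih => exact hθ.symm ih
  | trans _ _ ih₁ ih₂ => exact hθ.trans ih₁ ih₂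
  | comp_congr _ _ ih₁ ih₂ => exact hθ.comp_congr ih₁ ih₂
  | pair_congr _ _ ih₁ ih₂ => exact hθ.pair_congr ih₁ ih₂
  | proj_left f g => exact hθ.of_cqEq (CQEq.proj_left f g)
  | proj_right f g => exact hθ.of_cqEq (CQEq.proj_right f g)
  | lift f g h => exact hθ.of_cqEq (CQEq.lift f g h)
  | assoc a b c => exact hθ.of_cqEq (CQEq.assoc a b c)
  | one_mul a => exact hθ.of_cqEq (CQEq.one_mul a)
  | mul_one a => exact hθ.of_cqEq (CQEq.mul_one a)

lemma of_word_append {u v : List Bool} {c : Bool}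
    (h : θ (word (u ++ [c])) (word (v ++ [c]))) : θ (word u) (word v) :=
  hθ.congr_cqEq (hθ.mul_right (pair I I) h)
    (CQEq.word_append_mul_pair_one u c) (CQEq.word_append_mul_pair_one v c)

lemma forall_of_word_append_true_false {u v : List Bool}
    (h : θ (word (u ++ [true])) (word (v ++ [false]))) : ∀ s t, θ s t := fun s t =>
  hθ.congr_cqEq (hθ.mul_right (pair (constTree u.length s) (constTree v.length t)) h)
    ((CQEq.word_append_mul_pair u true _ _).trans (CQEq.word_mul_constTree u s))
    ((CQEq.word_append_mul_pair v false _ _).trans (CQEq.word_mul_constTree v t))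

lemma forall_of_word_append_ne {u v : List Bool} {c c' : Bool} (hc : c ≠ c')
    (h : θ (word (u ++ [c])) (word (v ++ [c']))) : ∀ s t, θ s t := by
  cases c <;> cases c'
  · exact absurd rfl hc
  · exact fun s t => hθ.symm (hθ.forall_of_word_append_true_false (hθ.symm h) t s)
  · exact hθ.forall_of_word_append_true_false h
  · exact absurd rfl hc

lemma forall_of_one_word_append {w : List Bool} {c : Bool} (h : θ I (word (w ++ [c]))) :
    ∀ s t, θ s t :=
  hθ.forall_of_word_append_ne (u := []) (v := (!c) :: w) (Bool.not_ne_self c)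
    (hθ.mul_left (letter !c) h)

lemma forall_of_word_ne {u v : List Bool} (huv : u ≠ v) (h : θ (word u) (word v)) :
    ∀ s t, θ s t := by
  induction u using List.reverseRecOn generalizing v with
  | nil =>
    obtain rfl | ⟨v, c, rfl⟩ := v.eq_nil_or_concat'
    · exact absurd rfl huv
    · exact hθ.forall_of_one_word_append h
  | append_singleton u c ih =>
    obtain rfl | ⟨v, c', rfl⟩ := v.eq_nil_or_concat'
    · exact hθ.forall_of_one_word_append (hθ.symm h)
    · by_cases hc : c = c'
      · subst hc
        exact ih (fun e => huv (e ▸ rfl)) (hθ.of_word_append h)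
      · exact hθ.forall_of_word_append_ne hc h

lemma surj_of_one_pair (h : θ I (pair a b)) : θ (pair L R) I :=
  hθ.trans (hθ.pair_congr (hθ.congr_cqEq (hθ.mul_left L h) (CQEq.mul_one L) (CQEq.proj_left a b))
    (hθ.congr_cqEq (hθ.mul_left R h) (CQEq.mul_one R) (CQEq.proj_right a b))) (hθ.symm h)

lemma surj_of_word_pair {w : List Bool} (h : θ (word w) (pair a b)) : θ (pair L R) I :=
  hθ.surj_of_one_pair (hθ.congr_cqEq (hθ.mul_right (constTree w.length I) h)
    (CQEq.word_mul_constTree w I) (CQEq.lift a b _))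

lemma surj_of_toTerm_ne : ∀ {X Y : CQNormal}, X ≠ Y → θ X.toTerm Y.toTerm → θ (pair L R) I
  | leaf _, leaf _, hne, h => hθ.forall_of_word_ne (fun e => hne (congrArg leaf e)) h _ _
  | leaf _, node _ _, _, h => hθ.surj_of_word_pair h
  | node _ _, leaf _, _, h => hθ.surj_of_word_pair (hθ.symm h)
  | node X₁ X₂, node Y₁ Y₂, hne, h => by
    by_cases h₁ : X₁ = Y₁
    · exact surj_of_toTerm_ne (fun h₂ => hne (by rw [h₁, h₂])) (hθ.snd h)
    · exact surj_of_toTerm_ne h₁ (hθ.fst h)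

lemma surj_of_not_cqEq (h : θ a b) (hab : ¬CQEq a b) : θ (pair L R) I := by
  obtain ⟨X, hX⟩ := exists_cqEq_toTerm a
  obtain ⟨Y, hY⟩ := exists_cqEq_toTerm b
  refine hθ.surj_of_toTerm_ne (fun hXY => hab ?_) (hθ.congr_cqEq h hX hY)
  exact hX.trans (hXY ▸ hY.symm)

lemma forall_of_word_not_cmEq : ∀ (Y : CQNormal) {u : List Bool},
    ¬CMEq (word u) Y.toTerm → θ (word u) Y.toTerm → ∀ s t, θ s t
  | leaf _, _, hne, h => hθ.forall_of_word_ne (fun e => hne (by subst e; exact CMEq.refl _)) h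
  | node Y₁ Y₂, u, hne, h => by
    by_cases h₁ : CMEq (word (true :: u)) Y₁.toTerm
    · refine forall_of_word_not_cmEq Y₂ (u := false :: u) (fun h₂ => hne ?_)
        (hθ.congr_cqEq (hθ.mul_left R h) (CQEq.refl _) (CQEq.proj_right _ _))
      exact (CMEq.eta (word u)).symm.trans (CMEq.pair_congr h₁ h₂)
    · exact forall_of_word_not_cmEq Y₁ h₁
        (hθ.congr_cqEq (hθ.mul_left L h) (CQEq.refl _) (CQEq.proj_left _ _))

lemma forall_of_toTerm_not_cmEq : ∀ {X Y : CQNormal},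
    ¬CMEq X.toTerm Y.toTerm → θ X.toTerm Y.toTerm → ∀ s t, θ s t
  | leaf _, Y, hne, h => hθ.forall_of_word_not_cmEq Y hne h
  | node _ _, leaf _, hne, h => hθ.forall_of_word_not_cmEq _ (fun e => hne e.symm) (hθ.symm h)
  | node X₁ X₂, node Y₁ Y₂, hne, h => by
    by_cases h₁ : CMEq X₁.toTerm Y₁.toTerm
    · exact forall_of_toTerm_not_cmEq (fun h₂ => hne (CMEq.pair_congr h₁ h₂)) (hθ.snd h)
    · exact forall_of_toTerm_not_cmEq h₁ (hθ.fst h)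

lemma forall_of_not_cmEq (h : θ a b) (hab : ¬CMEq a b) : ∀ s t, θ s t := by
  obtain ⟨X, hX⟩ := exists_cqEq_toTerm a
  obtain ⟨Y, hY⟩ := exists_cqEq_toTerm b
  refine hθ.forall_of_toTerm_not_cmEq (fun hXY => hab ?_) (hθ.congr_cqEq h hX hY)
  exact hX.toCMEq.trans (hXY.trans hY.toCMEq.symm)

end IsCQCongruence

/-- Proposition 1: every congruence on CQ (given as a congruence on terms
containing `=_CQ`) that is strictly larger than equality on CQ and does not
identify all elements coincides with the congruence induced by `=_CM`;
so CM is the unique proper non-trivial quotient of CQ. -/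
theorem CQ_almost_simple (θ : Term → Term → Prop)
    (heq : Equivalence θ)
    (hcomp : ∀ {a a' b b' : Term}, θ a a' → θ b b' → θ (comp a b) (comp a' b'))
    (hpair : ∀ {a a' b b' : Term}, θ a a' → θ b b' → θ (pair a b) (pair a' b'))
    (hCQ : ∀ a b : Term, CQEq a b → θ a b)
    (hproper : ∃ a b : Term, θ a b ∧ ¬ CQEq a b)
    (hnontrivial : ∃ a b : Term, ¬ θ a b) :
    ∀ a b : Term, θ a b ↔ CMEq a b := by
  have hθ : IsCQCongruence θ := ⟨heq, hcomp, hpair, hCQ _ _⟩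
  obtain ⟨a₀, b₀, hθab, hcq⟩ := hproper
  obtain ⟨s, t, hst⟩ := hnontrivial
  have hsurj : θ (pair L R) I := hθ.surj_of_not_cqEq hθab hcq
  intro a b
  refine ⟨fun h => ?_, hθ.of_cmEq hsurj⟩
  by_contra hcm
  exact hst (hθ.forall_of_not_cmEq h hcm s t)
end

section
/- (Content of the proof of Theorem 5) A finite set B of terms in CQ normal form covers Cantor space if and only if no shift is bad for B. -/
open Term

/-! A bad shift `S` defeats every sequence, since every product `S * F_1 * ⋯ * F_n`
keeps a shift as normal form. Conversely, if no shift is bad, enumerate all terms `S_0, S_1, …`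
and build the sequence by finite extensions: at stage `k`, if `S_k` times the current prefix
still reduces to a shift `N` in normal form, then `N` is not bad, so some word over `B` takes
`N` out of the shifts, and appending it settles `S_k` for good. That this works for
`S_k * prefix` and not just for `N` is confluence, which we get from an explicit normalizer. -/

section Reduction

variable {J : Set ℕ}

theorem red_refl (a : Term) : Red J a a := ⟨a, .refl, .refl a⟩

theorem red_of_assocEq {a b : Term} (h : AssocEq a b) : Red J a b := ⟨a, .refl, h⟩

theorem red_of_rule {n : ℕ} {a b : Term} (hn : n ∈ J) (h : Rule n a b) : Red J a b :=
  ⟨b, .single ⟨a, b, .refl a, .rule hn h, .refl b⟩, .refl b⟩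

theorem red_trans {a b c : Term} (hab : Red J a b) (hbc : Red J b c) : Red J a c := by
  obtain ⟨d, had, hdb⟩ := hab
  obtain ⟨e, hbe, hec⟩ := hbc
  rcases hbe.cases_head with rfl | ⟨x, ⟨y, z, hby, hyz, hzx⟩, hxe⟩
  · exact ⟨d, had, hdb.trans hec⟩
  · exact ⟨e, had.tail ⟨y, z, hdb.trans hby, hyz, hzx⟩ |>.trans hxe, hec⟩

theorem Red.map (F : Term → Term) (hA : ∀ {a b}, AssocEq a b → AssocEq (F a) (F b))
    (hS : ∀ {a b}, Step J a b → Step J (F a) (F b)) {a b : Term} (h : Red J a b) :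
    Red J (F a) (F b) := by
  obtain ⟨c, hac, hcb⟩ := h
  refine ⟨F c, hac.lift F fun x y ⟨x', y', hx, hxy, hy⟩ => ?_, hA hcb⟩
  exact ⟨F x', F y', hA hx, hS hxy, hA hy⟩

theorem red_comp {a a' b b' : Term} (ha : Red J a a') (hb : Red J b b') :
    Red J (comp a b) (comp a' b') :=
  red_trans (ha.map (comp · b) (.comp_congr · (.refl b)) .comp_left)
    (hb.map (comp a' ·) (.comp_congr (.refl a') ·) .comp_right)

theorem red_pair {a a' b b' : Term} (ha : Red J a a') (hb : Red J b b') :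
    Red J (pair a b) (pair a' b') :=
  red_trans (ha.map (pair · b) (.pair_congr · (.refl b)) .pair_left)
    (hb.map (pair a' ·) (.pair_congr (.refl a') ·) .pair_right)

theorem eq_I_iff_of_assocEq {a b : Term} (h : AssocEq a b) : a = I ↔ b = I := by
  induction h with
  | symm _ ih => exact ih.symm
  | trans _ _ ih₁ ih₂ => exact ih₁.trans ih₂
  | _ => simp

theorem nf_I : NF J I := by
  rintro b ⟨a, c, hIa, hac, -⟩
  obtain rfl := (eq_I_iff_of_assocEq hIa).mp rfl
  rcases hac with ⟨_, ⟨⟩⟩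

end Reduction

/-- On CQ normal forms `a` and `c`, `compNormal a c` is the CQ normal form of `a * c`. -/
def compNormal : Term → Term → Term
  | I, c => c
  | L, pair a _ => a
  | L, I => L
  | L, c => comp L c
  | R, pair _ b => b
  | R, I => R
  | R, c => comp R c
  | comp x y, c => compNormal x (compNormal y c)
  | pair a b, c => pair (compNormal a c) (compNormal b c)

def normalForm : Term → Term
  | I => I
  | L => L
  | R => R
  | comp a b => compNormal (normalForm a) (normalForm b)
  | pair a b => pair (normalForm a) (normalForm b)

theorem compNormal_assoc (a b c : Term) :
    compNormal (compNormal a b) c = compNormal a (compNormal b c) := by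
  induction a generalizing b c with
  | I => rfl
  | L => cases b <;> simp [compNormal]
  | R => cases b <;> simp [compNormal]
  | comp x y ihx ihy => simp [compNormal, ihx, ihy]
  | pair p q ihp ihq => simp [compNormal, ihp, ihq]

theorem compNormal_normalForm_I (t : Term) : compNormal (normalForm t) I = normalForm t := by
  induction t with
  | comp a b _ ihb => rw [normalForm, compNormal_assoc, ihb]
  | pair a b iha ihb => rw [normalForm, compNormal, iha, ihb]
  | _ => rfl

theorem normalForm_eq_of_assocEq {a b : Term} (h : AssocEq a b) :
    normalForm a = normalForm b := by
  induction h with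
  | assoc a b c => exact compNormal_assoc _ _ _
  | refl => rfl
  | symm _ ih => exact ih.symm
  | trans _ _ ih₁ ih₂ => exact ih₁.trans ih₂
  | comp_congr _ _ ih₁ ih₂ => rw [normalForm, normalForm, ih₁, ih₂]
  | pair_congr _ _ ih₁ ih₂ => rw [normalForm, normalForm, ih₁, ih₂]

theorem normalForm_eq_of_step {a b : Term} (h : Step rules15 a b) :
    normalForm a = normalForm b := by
  induction h with
  | rule hn hr =>
    cases hr with
    | r5 => exact compNormal_normalForm_I _
    | r6 | r7 => simp [rules15] at hn
    | _ => rfl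
  | comp_left _ ih | comp_right _ ih | pair_left _ ih | pair_right _ ih =>
    rw [normalForm, normalForm, ih]

theorem normalForm_eq_of_red {a b : Term} (h : Red rules15 a b) :
    normalForm a = normalForm b := by
  obtain ⟨c, hac, hcb⟩ := h
  refine .trans ?_ (normalForm_eq_of_assocEq hcb)
  clear hcb
  induction hac with
  | refl => rfl
  | tail _ hxy ih =>
    obtain ⟨x', y', hx, hxy', hy⟩ := hxy
    rw [ih, normalForm_eq_of_assocEq hx, normalForm_eq_of_step hxy',
      normalForm_eq_of_assocEq hy]

theorem red_compNormal (a c : Term) : Red rules15 (comp a c) (compNormal a c) := by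
  induction a generalizing c with
  | I => exact red_of_rule (by norm_num [rules15]) (.r4 c)
  | L =>
    cases c with
    | I => exact red_of_rule (by norm_num [rules15]) (.r5 L)
    | pair x y => exact red_of_rule (by norm_num [rules15]) (.r1 x y)
    | _ => exact red_refl _
  | R =>
    cases c with
    | I => exact red_of_rule (by norm_num [rules15]) (.r5 R)
    | pair x y => exact red_of_rule (by norm_num [rules15]) (.r2 x y)
    | _ => exact red_refl _
  | comp x y ihx ihy =>
    exact red_trans (red_of_assocEq (.assoc x y c))
      (red_trans (red_comp (red_refl x) (ihy c)) (ihx _))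
  | pair p q ihp ihq =>
    exact red_trans (red_of_rule (by norm_num [rules15]) (.r3 p q c))
      (red_pair (ihp c) (ihq c))

theorem red_normalForm (t : Term) : Red rules15 t (normalForm t) := by
  induction t with
  | comp a b iha ihb => exact red_trans (red_comp iha ihb) (red_compNormal _ _)
  | pair a b iha ihb => exact red_pair iha ihb
  | _ => exact red_refl _

theorem NF.assocEq_normalForm {a : Term} (h : NF rules15 a) : AssocEq a (normalForm a) := by
  obtain ⟨c, hac, hc⟩ := red_normalForm a
  rcases hac.cases_head with rfl | ⟨x, hax, -⟩
  · exact hc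
  · exact absurd hax (h x)

theorem normalForm_listProd_append (P l : List Term) :
    normalForm (listProd (P ++ l)) =
      compNormal (normalForm (listProd P)) (normalForm (listProd l)) := by
  induction P with
  | nil => rfl
  | cons a P ih => rw [List.cons_append, listProd, listProd, normalForm, normalForm, ih,
      compNormal_assoc]

theorem nfIsShift_of_normalForm_eq {X Y : Term} (h : normalForm X = normalForm Y)
    (hX : nfIsShift X) : nfIsShift Y := by
  obtain ⟨N, hXN, hN, hNS⟩ := hX
  refine ⟨N, red_trans (red_normalForm Y) (red_of_assocEq ?_), hN, hNS⟩
  rw [← h, normalForm_eq_of_red hXN]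
  exact hN.assocEq_normalForm.symm

theorem badFor_nil_I : BadFor [] I := by
  intro l hl
  obtain rfl : l = [] :=
    List.eq_nil_iff_forall_not_mem.mpr fun t ht => by simpa using hl t ht
  exact ⟨I, red_of_rule (by norm_num [rules15]) (.r4 I), nf_I, .unit⟩

theorem exists_append_not_nfIsShift {B : List Term} (hB : ¬ ∃ S, IsShift S ∧ BadFor B S)
    (S : Term) (P : List Term) :
    ∃ l, (∀ t ∈ l, t ∈ B) ∧ ¬ nfIsShift (comp S (listProd (P ++ l))) := by
  by_cases hSP : nfIsShift (comp S (listProd P))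
  · obtain ⟨N, hN, -, hNS⟩ := hSP
    obtain ⟨l, hlB, hl⟩ :
        ∃ l, (∀ t ∈ l, t ∈ B) ∧ ¬ nfIsShift (comp N (listProd l)) := by
      simpa [BadFor] using fun h => hB ⟨N, hNS, h⟩
    refine ⟨l, hlB, fun h => hl (nfIsShift_of_normalForm_eq ?_ h)⟩
    rw [normalForm, normalForm, normalForm_listProd_append, ← compNormal_assoc,
      ← normalForm_eq_of_red hN, normalForm]
  · exact ⟨[], by simp, by simpa using hSP⟩

theorem encodeTerm_injective : Function.Injective encodeTerm := by
  intro a b h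
  induction a generalizing b with
  | comp a₁ a₂ ih₁ ih₂ | pair a₁ a₂ ih₁ ih₂ =>
    cases b <;> simp [encodeTerm, Nat.pair_eq_pair] at h <;> try omega
    rw [ih₁ h.1, ih₂ h.2]
  | _ => cases b <;> simp [encodeTerm] at h ⊢

instance : Countable Term := encodeTerm_injective.countable

theorem exists_seq_forall_exists_prefix_nat {α : Type*} [Nonempty α]
    (R : ℕ → List α → Prop) (hR : ∀ k P, ∃ l, R k (P ++ l)) :
    ∃ f : ℕ → α, ∀ k, ∃ n, R k ((List.range n).map f) := by
  choose ext hext using hR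
  let a := Classical.arbitrary α
  -- stage `k` settles `R k`; the padding `[a]` makes the stages grow without bound
  let P : ℕ → List α := fun k => Nat.rec [] (fun k Pk => Pk ++ ext k Pk ++ [a]) k
  have P_succ : ∀ k, P (k + 1) = P k ++ ext k (P k) ++ [a] := fun _ => rfl
  have P_prefix : ∀ ⦃k m⦄, k ≤ m → P k <+: P m :=
    Nat.rel_of_forall_rel_succ_of_le _ fun k => by
      rw [P_succ, List.append_assoc]; exact List.prefix_append _ _
  have P_length : ∀ k, k ≤ (P k).length := by
    intro k
    induction k with
    | zero => simp
    | succ k ih =>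
      rw [P_succ, List.length_append, List.length_append, List.length_singleton]
      omega
  let f : ℕ → α := fun n => (P (n + 1)).getD n a
  have map_f : ∀ m n, n ≤ (P m).length → (List.range n).map f = (P m).take n := by
    intro m n hn
    refine List.ext_getElem (by simp [hn]) fun i hi _ => ?_
    have hi₁ : i < (P (i + 1)).length := by have := P_length (i + 1); omega
    have hi₂ : i < (P m).length := by
      rw [List.length_map, List.length_range] at hi
      omega
    simp only [List.getElem_map, List.getElem_range, List.getElem_take, f,
      List.getD_eq_getElem _ _ hi₁]
    rw [(P_prefix (le_max_left (i + 1) m)).getElem hi₁,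
      (P_prefix (le_max_right (i + 1) m)).getElem hi₂]
  refine ⟨f, fun k => ⟨(P k ++ ext k (P k)).length, ?_⟩⟩
  rw [map_f (k + 1) _ (by simp [P_succ]), P_succ, List.take_append_length]
  exact hext k (P k)

theorem exists_seq_forall_exists_prefix {α ι : Type*} [Nonempty α] [Countable ι]
    (R : ι → List α → Prop) (hR : ∀ i P, ∃ l, R i (P ++ l)) :
    ∃ f : ℕ → α, ∀ i, ∃ n, R i ((List.range n).map f) := by
  rcases isEmpty_or_nonempty ι with hι | hι
  · exact ⟨fun _ => Classical.arbitrary α, isEmptyElim⟩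
  obtain ⟨e, he⟩ := exists_surjective_nat ι
  obtain ⟨f, hf⟩ := exists_seq_forall_exists_prefix_nat (fun k => R (e k)) fun k => hR (e k)
  refine ⟨f, fun i => ?_⟩
  obtain ⟨k, rfl⟩ := he i
  exact hf k

theorem covers_iff_no_bad_shift_general (B : List Term) :
    Covers B ↔ ¬ ∃ S : Term, IsShift S ∧ BadFor B S := by
  constructor
  · rintro ⟨f, hfB, hf⟩ ⟨S, hS, hbad⟩
    obtain ⟨n, hn⟩ := hf S hS
    exact hn (hbad _ (by simpa using fun i _ => hfB i))
  · intro hB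
    obtain ⟨b, hb⟩ := List.exists_mem_of_ne_nil B (by
      rintro rfl
      exact hB ⟨I, .unit, badFor_nil_I⟩)
    have : Nonempty {t // t ∈ B} := ⟨⟨b, hb⟩⟩
    obtain ⟨f, hf⟩ := exists_seq_forall_exists_prefix
      (fun S (P : List {t // t ∈ B}) => ¬ nfIsShift (comp S (listProd (P.map Subtype.val))))
      fun S P => by
        obtain ⟨l, hlB, hl⟩ := exists_append_not_nfIsShift hB S (P.map Subtype.val)
        lift l to List {t // t ∈ B} using hlB
        exact ⟨l, by simpa using hl⟩
    exact ⟨Subtype.val ∘ f, fun n => (f n).2, fun S _ => by simpa [prodTake] using hf S⟩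

/-- Content of the proof of Theorem 5: a finite set `B` of terms in CQ normal
form covers Cantor space if and only if no shift is bad for `B`. -/
theorem covers_iff_no_bad_shift (B : List Term) (hB : ∀ t ∈ B, NF rules15 t) :
    Covers B ↔ ¬ ∃ S : Term, IsShift S ∧ BadFor B S :=
  covers_iff_no_bad_shift_general B
end
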